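/- Prefix independence of the initialized fragment: for every LTS L, every ψ ∈ L⁺(F_p^∞), every run ρ of L, every bound k ∈ ℕ, and every i ≥ 0: (ρ,k) ⊨ F ψ if and only if (ρ[i..], k) ⊨ F ψ. -/
import Mathlib


open scoped Classical
open MeasureTheory

/-- A labelled transition system: a finite set of states `S`, an initial state,
a transition relation in which every state has at least one successor, and a
labeling of states by sets of atomic propositions. -/
structure LTS (S AP : Type) where
  init : S
  T : S → S → Prop
  lbl : S → Set AP
  succ_nonempty : ∀ s : S, ∃ t : S, T s t

variable {S AP : Type}

/-- A run of an LTS: an infinite sequence of states following the transitions. -/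
def IsRun (L : LTS S AP) (ρ : ℕ → S) : Prop := ∀ i : ℕ, L.T (ρ i) (ρ (i + 1))

/-- The shifted run `ρ[i..]`. -/
def shift (ρ : ℕ → S) (i : ℕ) : ℕ → S := fun n => ρ (n + i)

/-- Formulas of the prompt Muller fragment `L(F_p^∞)`:
`φ ::= α | ¬α | φ ∨ φ | φ ∧ φ | F_p^∞ φ`. -/
inductive PM (AP : Type) : Type where
  | pos : AP → PM AP
  | neg : AP → PM AP
  | or : PM AP → PM AP → PM AP
  | and : PM AP → PM AP → PM AP
  | finf : PM AP → PM AP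

/-- Satisfaction `(ρ, k) ⊨ φ` of a prompt Muller formula by a run at bound `k`. -/
def Sat (L : LTS S AP) : PM AP → (ℕ → S) → ℕ → Prop
  | .pos a, ρ, _ => a ∈ L.lbl (ρ 0)
  | .neg a, ρ, _ => a ∉ L.lbl (ρ 0)
  | .or φ ψ, ρ, k => Sat L φ ρ k ∨ Sat L ψ ρ k
  | .and φ ψ, ρ, k => Sat L φ ρ k ∧ Sat L ψ ρ k
  | .finf φ, ρ, k => ∀ i : ℕ, ∃ j ≤ k, Sat L φ (shift ρ (i + j)) k

/-- The positive fragment `L⁺(F_p^∞)`: the smallest set of formulas containing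
`F_p^∞ φ` for every formula `φ` and closed under `∨`, `∧` and `F_p^∞`. -/
inductive Positive {AP : Type} : PM AP → Prop where
  | finf (φ : PM AP) : Positive (.finf φ)
  | or {φ ψ : PM AP} : Positive φ → Positive ψ → Positive (.or φ ψ)
  | and {φ ψ : PM AP} : Positive φ → Positive ψ → Positive (.and φ ψ)

/-- Satisfaction `(ρ, k) ⊨ F ψ`: some suffix of `ρ` satisfies `ψ` at bound `k`. -/
def SatF (L : LTS S AP) (ψ : PM AP) (ρ : ℕ → S) (k : ℕ) : Prop :=
  ∃ i : ℕ, Sat L ψ (shift ρ i) k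


lemma shift_shift (ρ : ℕ → S) (a b : ℕ) : shift (shift ρ a) b = shift ρ (b + a) := by
  funext n; simp [shift]; ring_nf

lemma sat_shift (L : LTS S AP) {ψ : PM AP} (hψ : Positive ψ) (ρ : ℕ → S) (k n : ℕ)
    (h : Sat L ψ ρ k) : Sat L ψ (shift ρ n) k := by
  induction hψ generalizing ρ with
  | finf φ =>
    intro i
    obtain ⟨j, hj, hs⟩ := h (i + n)
    exact ⟨j, hj, by rw [shift_shift]; convert hs using 2; ring⟩
  | or h1 h2 ih1 ih2 =>
    rcases h with h | h
    · exact Or.inl (ih1 ρ h)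
    · exact Or.inr (ih2 ρ h)
  | and h1 h2 ih1 ih2 => exact ⟨ih1 ρ h.1, ih2 ρ h.2⟩

/-- **prefix independence of the initialized fragment.** For every LTS
`L`, `ψ ∈ L⁺(F_p^∞)`, run `ρ` of `L`, bound `k` and `i ≥ 0`:
`(ρ,k) ⊨ F ψ` iff `(ρ[i..],k) ⊨ F ψ`. -/
theorem prefix_independence [Fintype S] (L : LTS S AP) (ψ : PM AP) (hψ : Positive ψ)
    (ρ : ℕ → S) (hρ : IsRun L ρ) (k i : ℕ) :
    SatF L ψ ρ k ↔ SatF L ψ (shift ρ i) k := by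
  constructor
  · rintro ⟨m, hm⟩
    exact ⟨m, by rw [shift_shift, Nat.add_comm]; rw [← shift_shift]; exact sat_shift L hψ _ k i hm⟩
  · rintro ⟨m, hm⟩
    rw [shift_shift] at hm
    exact ⟨m + i, hm⟩
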